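/- arXiv:2512.11238 — 2 statements merged into one kernel-verified Lean document; each statement's English description precedes it below -/
import Mathlib

section
/- Let α ∈ ℝ and let β > 0 be not an integer. In ℝ[[X,Y]] set B_0 = Σ_{m=0}^∞ (−αβ)^m X^m/(m!·(1−β)_m), B_1 = Σ_{m=0}^∞ (−αβ)^m X^m/(m!·(1+β)_m), A_0 = (X/β)·B_0′ and A_1 = (X/β)·B_1′ + B_1 (formal derivatives in X). The series B_0 + Y·B_1 has constant coefficient 1 and is invertible in ℝ[[X,Y]], and the formal power series f := (A_0 + Y·A_1)·(B_0 + Y·B_1)^{−1} satisfies X·∂f/∂X + β·Y·∂f/∂Y − β·f + β·f² + α·X = 0 in ℝ[[X,Y]]. (This is an explicit bivariate rational solution realizing the paper's form (riccrat): substituting Y = x^β gives a solution of the Riccati equation written as a ratio with numerator and denominator each linear in x^β.) -/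
/-- The Euler-type operator `X·∂/∂X + β·Y·∂/∂Y` on bivariate formal power series
(variable `0` is `X`, variable `1` is `Y`), defined coefficientwise. -/
noncomputable def eulerOp (β : ℝ) (f : MvPowerSeries (Fin 2) ℝ) : MvPowerSeries (Fin 2) ℝ :=
  fun d => (((d 0 : ℕ) : ℝ) + β * ((d 1 : ℕ) : ℝ)) * MvPowerSeries.coeff d f

/-- Embedding of a univariate formal power series into `ℝ[[X,Y]]` as a series in the
first variable `X` only. -/
noncomputable def embX (p : PowerSeries ℝ) : MvPowerSeries (Fin 2) ℝ :=
  fun d => if d 1 = 0 then PowerSeries.coeff (d 0) p else 0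

/-- `B₀ = ∑_m (-αβ)^m X^m / (m! (1-β)_m)` as a univariate series. -/
noncomputable def riccB0 (α β : ℝ) : PowerSeries ℝ :=
  PowerSeries.mk fun m : ℕ =>
    (-(α * β)) ^ m / ((m.factorial : ℝ) * (ascPochhammer ℝ m).eval (1 - β))

/-- `B₁ = ∑_m (-αβ)^m X^m / (m! (1+β)_m)` as a univariate series. -/
noncomputable def riccB1 (α β : ℝ) : PowerSeries ℝ :=
  PowerSeries.mk fun m : ℕ =>
    (-(α * β)) ^ m / ((m.factorial : ℝ) * (ascPochhammer ℝ m).eval (1 + β))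

/-- `A₀ = (X/β)·B₀′` (formal derivative in `X`). -/
noncomputable def riccA0 (α β : ℝ) : PowerSeries ℝ :=
  PowerSeries.C β⁻¹ * PowerSeries.X * PowerSeries.derivative ℝ (riccB0 α β)

/-- `A₁ = (X/β)·B₁′ + B₁` (formal derivative in `X`). -/
noncomputable def riccA1 (α β : ℝ) : PowerSeries ℝ :=
  PowerSeries.C β⁻¹ * PowerSeries.X * PowerSeries.derivative ℝ (riccB1 α β) + riccB1 α β

/-- The denominator `B₀ + Y·B₁` in `ℝ[[X,Y]]`. -/
noncomputable def riccDen (α β : ℝ) : MvPowerSeries (Fin 2) ℝ :=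
  embX (riccB0 α β) + MvPowerSeries.X 1 * embX (riccB1 α β)

/-- The rational solution `f = (A₀ + Y·A₁)·(B₀ + Y·B₁)⁻¹` in `ℝ[[X,Y]]`. -/
noncomputable def riccF (α β : ℝ) : MvPowerSeries (Fin 2) ℝ :=
  (embX (riccA0 α β) + MvPowerSeries.X 1 * embX (riccA1 α β)) * (riccDen α β)⁻¹

/-!
Write `θ = X ∂_X + β Y ∂_Y`, `D = B₀ + Y B₁` and `N = A₀ + Y A₁`. The definitions of `A₀, A₁`
say exactly `θ D = β N`. The series `B₀ = ₀F₁(; 1 - β; -αβ X)` and `B₁ = ₀F₁(; 1 + β; -αβ X)`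
satisfy the hypergeometric equations `ϑ (ϑ ∓ β) B = -αβ X B` with `ϑ = X d/dX`, which turn into
`θ N = β N - α X D`. This first-order linear system is the linearisation of the Riccati equation:
for any derivation `θ`, it forces `f = N / D` to satisfy `θ f = β f - β f² - α X`.
-/

namespace PowerSeries

theorem coeff_X_mul_derivative {R : Type*} [CommSemiring R] (f : R⟦X⟧) (n : ℕ) :
    coeff n (X * derivative R f) = n * coeff n f := by
  cases n with
  | zero => simp
  | succ n =>
    rw [coeff_succ_X_mul, coeff_derivative, mul_comm]
    push_cast
    ring

theorem derivative_C_mul {R : Type*} [CommSemiring R] (c : R) (f : R⟦X⟧) :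
    derivative R (C c * f) = C c * derivative R f := by
  rw [Derivation.leibniz, derivative_C, smul_zero, add_zero, smul_eq_mul]

variable {K : Type*} [Field K]

/-- `₀F₁(; b; z X) = ∑ₘ zᵐ Xᵐ / (m! (b)ₘ)`. -/
noncomputable def hypergeometric0F1 (b z : K) : K⟦X⟧ :=
  mk fun m => z ^ m / ((m.factorial : K) * (ascPochhammer K m).eval b)

theorem constantCoeff_hypergeometric0F1 (b z : K) :
    constantCoeff (hypergeometric0F1 b z) = 1 := by
  simp [hypergeometric0F1, ← coeff_zero_eq_constantCoeff_apply]

variable [CharZero K] {b : K}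

theorem coeff_hypergeometric0F1_succ (hb : ∀ k : ℕ, (k : K) ≠ -b) (z : K) (m : ℕ) :
    (m + 1) * (b + m) * coeff (m + 1) (hypergeometric0F1 b z)
      = z * coeff m (hypergeometric0F1 b z) := by
  have hpoch : (ascPochhammer K m).eval b ≠ 0 := by
    simpa [ascPochhammer_eval_eq_zero_iff] using fun k _ => hb k
  have hbm : b + m ≠ 0 := fun h => hb m (by linear_combination h)
  simp only [hypergeometric0F1, coeff_mk, ascPochhammer_succ_eval, Nat.factorial_succ]
  push_cast
  field_simp
  ring

theorem hypergeometric0F1_ode (hb : ∀ k : ℕ, (k : K) ≠ -b) (z : K) :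
    X * derivative K (X * derivative K (hypergeometric0F1 b z))
        + C (b - 1) * (X * derivative K (hypergeometric0F1 b z))
      = C z * (X * hypergeometric0F1 b z) := by
  ext n
  simp only [map_add, coeff_C_mul, coeff_X_mul_derivative]
  cases n with
  | zero => simp
  | succ m =>
    rw [coeff_succ_X_mul, ← coeff_hypergeometric0F1_succ hb]
    push_cast
    ring

end PowerSeries

theorem MvPowerSeries.coeff_X_mul_pderiv {σ R : Type*} [CommSemiring R] (i : σ)
    (f : MvPowerSeries σ R) (d : σ →₀ ℕ) :
    coeff d (X i * pderiv R i f) = d i * coeff d f := by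
  classical
  rw [X_def, coeff_monomial_mul, coeff_pderiv]
  split_ifs with h
  · have hi : 1 ≤ d i := Finsupp.single_le_iff.mp h
    rw [tsub_add_cancel_of_le h, Finsupp.tsub_apply, Finsupp.single_eq_same, one_mul, mul_comm,
      ← Nat.cast_add_one, Nat.sub_add_cancel hi]
  · have hi : d i = 0 := by
      by_contra hne
      exact h (Finsupp.single_le_iff.mpr (Nat.one_le_iff_ne_zero.mpr hne))
    rw [hi, Nat.cast_zero, zero_mul]

theorem Derivation.riccati_of_linear_system {R A : Type*} [CommRing R] [CommRing A]
    [Algebra R A] (θ : Derivation R A A) {b c N D I : A} (hDI : D * I = 1)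
    (hD : θ D = b * N) (hN : θ N = b * N - c * D) :
    θ (N * I) - b * (N * I) + b * (N * I) ^ 2 + c = 0 := by
  have hI : θ I = -(I ^ 2 * θ D) := by
    rw [θ.leibniz_of_mul_eq_one ((mul_comm I D).trans hDI), smul_eq_mul, neg_mul]
  rw [θ.leibniz, smul_eq_mul, smul_eq_mul, hI, hN, hD]
  linear_combination (-c) * hDI

section Univariate

open PowerSeries

variable (α β : ℝ)

theorem C_mul_riccA0 (hβ : β ≠ 0) :
    C β * riccA0 α β = X * derivative ℝ (riccB0 α β) := by
  rw [riccA0, mul_assoc, ← mul_assoc, ← map_mul, mul_inv_cancel₀ hβ, map_one, one_mul]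

theorem C_mul_riccA1 (hβ : β ≠ 0) :
    C β * riccA1 α β = X * derivative ℝ (riccB1 α β) + C β * riccB1 α β := by
  rw [riccA1, mul_add, mul_assoc, ← mul_assoc, ← map_mul, mul_inv_cancel₀ hβ, map_one,
    one_mul]

theorem X_mul_derivative_riccA0 (hβ : β ≠ 0) (hb : ∀ k : ℕ, (k : ℝ) ≠ -(1 - β)) :
    X * derivative ℝ (riccA0 α β) + C α * (X * riccB0 α β) = C β * riccA0 α β := by
  have ode : X * derivative ℝ (X * derivative ℝ (riccB0 α β))
      + C (1 - β - 1) * (X * derivative ℝ (riccB0 α β))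
      = C (-(α * β)) * (X * riccB0 α β) :=
    hypergeometric0F1_ode hb _
  have hinv : C β⁻¹ * C β = 1 := by rw [← map_mul, inv_mul_cancel₀ hβ, map_one]
  rw [riccA0, mul_assoc, derivative_C_mul, mul_left_comm]
  simp only [map_sub, map_neg, map_mul, map_one] at ode
  linear_combination C β⁻¹ * ode - C α * (X * riccB0 α β) * hinv

theorem X_mul_derivative_riccA1 (hβ : β ≠ 0) (hb : ∀ k : ℕ, (k : ℝ) ≠ -(1 + β)) :
    X * derivative ℝ (riccA1 α β) = C (-α) * (X * riccB1 α β) := by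
  have ode : X * derivative ℝ (X * derivative ℝ (riccB1 α β))
      + C (1 + β - 1) * (X * derivative ℝ (riccB1 α β))
      = C (-(α * β)) * (X * riccB1 α β) :=
    hypergeometric0F1_ode hb _
  have hinv : C β⁻¹ * C β = 1 := by rw [← map_mul, inv_mul_cancel₀ hβ, map_one]
  rw [riccA1, map_add, mul_assoc, derivative_C_mul, mul_add, mul_left_comm]
  simp only [map_neg, map_mul, add_sub_cancel_left] at ode ⊢
  linear_combination C β⁻¹ * ode
    - (X * derivative ℝ (riccB1 α β) + C α * (X * riccB1 α β)) * hinv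

end Univariate

section Bivariate

open MvPowerSeries

noncomputable def eulerDerivation (β : ℝ) :
    Derivation ℝ (MvPowerSeries (Fin 2) ℝ) (MvPowerSeries (Fin 2) ℝ) :=
  (X 0 : MvPowerSeries (Fin 2) ℝ) • pderiv ℝ (0 : Fin 2)
    + (C β * X 1 : MvPowerSeries (Fin 2) ℝ) • pderiv ℝ (1 : Fin 2)

theorem coeff_eulerOp (β : ℝ) (f : MvPowerSeries (Fin 2) ℝ) (d : Fin 2 →₀ ℕ) :
    coeff d (eulerOp β f) = ((d 0 : ℝ) + β * d 1) * coeff d f :=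
  rfl

theorem eulerDerivation_apply (β : ℝ) (f : MvPowerSeries (Fin 2) ℝ) :
    eulerDerivation β f = eulerOp β f := by
  ext d
  rw [eulerDerivation, Derivation.add_apply, Derivation.smul_apply, Derivation.smul_apply,
    smul_eq_mul, smul_eq_mul, mul_assoc, map_add, coeff_C_mul, coeff_X_mul_pderiv,
    coeff_X_mul_pderiv, coeff_eulerOp]
  ring

theorem eulerDerivation_X_one (β : ℝ) : eulerDerivation β (X 1) = C β * X 1 := by
  simp [eulerDerivation]

theorem coeff_embX (p : PowerSeries ℝ) (d : Fin 2 →₀ ℕ) :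
    coeff d (embX p) = if d 1 = 0 then PowerSeries.coeff (d 0) p else 0 :=
  rfl

theorem constantCoeff_embX (p : PowerSeries ℝ) :
    constantCoeff (embX p) = PowerSeries.constantCoeff p := by
  simp [← coeff_zero_eq_constantCoeff_apply, coeff_embX]

theorem embX_add (p q : PowerSeries ℝ) : embX (p + q) = embX p + embX q := by
  ext d
  simp only [coeff_embX, map_add]
  split_ifs <;> simp

theorem embX_C_mul (c : ℝ) (p : PowerSeries ℝ) :
    embX (PowerSeries.C c * p) = C c * embX p := by
  ext d
  simp only [coeff_embX, coeff_C_mul, PowerSeries.coeff_C_mul]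
  split_ifs <;> simp

theorem embX_X_mul (p : PowerSeries ℝ) : embX (PowerSeries.X * p) = X 0 * embX p := by
  ext d
  have hd1 : (d - Finsupp.single 0 1 : Fin 2 →₀ ℕ) 1 = d 1 := by simp
  have hd0 : (d - Finsupp.single 0 1 : Fin 2 →₀ ℕ) 0 = d 0 - 1 := by simp
  rw [coeff_embX, X_def, coeff_monomial_mul, coeff_embX, hd1, hd0, one_mul]
  by_cases h : Finsupp.single (0 : Fin 2) 1 ≤ d
  · obtain ⟨k, hk⟩ := Nat.exists_eq_add_of_le' (Finsupp.single_le_iff.mp h)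
    simp [h, hk, PowerSeries.coeff_succ_X_mul]
  · have hk : d 0 = 0 := by
      by_contra hne
      exact h (Finsupp.single_le_iff.mpr (Nat.one_le_iff_ne_zero.mpr hne))
    simp [h, hk]

theorem eulerDerivation_embX (β : ℝ) (p : PowerSeries ℝ) :
    eulerDerivation β (embX p) = embX (PowerSeries.X * PowerSeries.derivative ℝ p) := by
  ext d
  rw [eulerDerivation_apply, coeff_eulerOp, coeff_embX, coeff_embX,
    PowerSeries.coeff_X_mul_derivative]
  split_ifs with h
  · rw [h]
    ring
  · rw [mul_zero]

variable (α β : ℝ)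

noncomputable def riccNum : MvPowerSeries (Fin 2) ℝ :=
  embX (riccA0 α β) + X 1 * embX (riccA1 α β)

theorem riccF_eq : riccF α β = riccNum α β * (riccDen α β)⁻¹ :=
  rfl

theorem constantCoeff_riccDen : constantCoeff (riccDen α β) = 1 := by
  rw [riccDen, map_add, map_mul, constantCoeff_X, zero_mul, add_zero, constantCoeff_embX]
  exact PowerSeries.constantCoeff_hypergeometric0F1 _ _

theorem eulerDerivation_riccDen (hβ : β ≠ 0) :
    eulerDerivation β (riccDen α β) = C β * riccNum α β := by
  have h0 : embX (PowerSeries.X * PowerSeries.derivative ℝ (riccB0 α β))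
      = C β * embX (riccA0 α β) := by
    rw [← C_mul_riccA0 α β hβ, embX_C_mul]
  have h1 : embX (PowerSeries.X * PowerSeries.derivative ℝ (riccB1 α β))
      + C β * embX (riccB1 α β) = C β * embX (riccA1 α β) := by
    rw [← embX_C_mul, ← embX_add, ← C_mul_riccA1 α β hβ, embX_C_mul]
  rw [riccDen, riccNum, map_add, Derivation.leibniz, eulerDerivation_embX, eulerDerivation_embX,
    eulerDerivation_X_one, smul_eq_mul, smul_eq_mul]
  linear_combination h0 + X 1 * h1

theorem eulerDerivation_riccNum (hβ : ∀ k : ℤ, β ≠ k) :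
    eulerDerivation β (riccNum α β) = C β * riccNum α β - C α * X 0 * riccDen α β := by
  have hβ0 : β ≠ 0 := by exact_mod_cast hβ 0
  have hb0 : ∀ k : ℕ, (k : ℝ) ≠ -(1 - β) := fun k h => hβ (k + 1) (by push_cast; linarith)
  have hb1 : ∀ k : ℕ, (k : ℝ) ≠ -(1 + β) := fun k h =>
    hβ (-(k + 1)) (by push_cast; linarith)
  have h0 : embX (PowerSeries.X * PowerSeries.derivative ℝ (riccA0 α β))
      + C α * (X 0 * embX (riccB0 α β)) = C β * embX (riccA0 α β) := by
    rw [← embX_X_mul, ← embX_C_mul, ← embX_add, X_mul_derivative_riccA0 α β hβ0 hb0,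
      embX_C_mul]
  have h1 : embX (PowerSeries.X * PowerSeries.derivative ℝ (riccA1 α β))
      = -(C α * (X 0 * embX (riccB1 α β))) := by
    rw [X_mul_derivative_riccA1 α β hβ0 hb1, embX_C_mul, embX_X_mul, map_neg, neg_mul]
  rw [riccDen, riccNum, map_add, Derivation.leibniz, eulerDerivation_embX, eulerDerivation_embX,
    eulerDerivation_X_one, smul_eq_mul, smul_eq_mul]
  linear_combination h0 + X 1 * h1

end Bivariate

theorem riccati_explicit_rational_solution_general (α β : ℝ)
    (hβ : ∀ k : ℤ, β ≠ (k : ℝ)) :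
    MvPowerSeries.constantCoeff (riccDen α β) = 1 ∧
    IsUnit (riccDen α β) ∧
    eulerOp β (riccF α β) - MvPowerSeries.C β * riccF α β
      + MvPowerSeries.C β * (riccF α β) ^ 2
      + MvPowerSeries.C α * MvPowerSeries.X 0 = 0 := by
  have hc := constantCoeff_riccDen α β
  have hβ0 : β ≠ 0 := by exact_mod_cast hβ 0
  refine ⟨hc, MvPowerSeries.isUnit_iff_constantCoeff.mpr (hc ▸ isUnit_one), ?_⟩
  rw [riccF_eq, ← eulerDerivation_apply]
  exact (eulerDerivation β).riccati_of_linear_system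
    (MvPowerSeries.mul_inv_cancel _ (by simp [hc]))
    (eulerDerivation_riccDen α β hβ0) (eulerDerivation_riccNum α β hβ)

/-- **Explicit bivariate rational solution of the Riccati equation** (the paper's form
(riccrat)): `B₀ + Y·B₁` has constant coefficient `1`, hence is invertible, and
`f = (A₀ + Y·A₁)·(B₀ + Y·B₁)⁻¹` satisfies
`X ∂f/∂X + β Y ∂f/∂Y - β f + β f² + α X = 0` in `ℝ[[X,Y]]`. -/
theorem riccati_explicit_rational_solution (α β : ℝ) (hβpos : 0 < β)
    (hβ : ∀ k : ℤ, β ≠ (k : ℝ)) :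
    MvPowerSeries.constantCoeff (riccDen α β) = 1 ∧
    IsUnit (riccDen α β) ∧
    eulerOp β (riccF α β) - MvPowerSeries.C β * riccF α β
      + MvPowerSeries.C β * (riccF α β) ^ 2
      + MvPowerSeries.C α * MvPowerSeries.X 0 = 0 :=
  riccati_explicit_rational_solution_general α β hβ
end

section
/- Let α, β ∈ ℝ with α ≠ 0 and β not an integer, and let c_k ∈ ℝ be the Riccati series coefficients: c_0 = 0 and (k − β)·c_k + β·Σ_{i=1}^{k−1} c_i·c_{k−i} + α·δ_{k,1} = 0 for k ≥ 1. Fix n ≥ 1 and define polynomials B_n(x) = Σ_{k=0}^{n} b_k x^k and A_n(x) = Σ_{k=1}^{n} a_k x^k by: b_0 = 1 and b_k = P_{n,k}·b_{k−1} for 1 ≤ k ≤ n, where P_{n,k} = −αβ·(2n−2k+1)(n−k+1)/( k·(n−(k−1)/2)·(β−(2n−k+1))·(β−k) ); and a_1 = c_1 and a_k = Q_{n,k}·a_{k−1} for 2 ≤ k ≤ n, where Q_{n,k} = −αβ·(2n−2k+3)(n−k+1)/( (k−1)·(n−(k−1)/2)·(β−(2n−k+2))·(β−k) ). Then (A_n,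 B_n) is an [n/n] Padé pair for the series (c_k), i.e. A_n − B_n·C_{2n} has zero coefficients in all degrees 0,…,2n. (These are the paper's direct product formulas for the Padé coefficients of the Riccati series, Algorithm 3.) -/
open Polynomial

/-- The truncation `C_N(x) = ∑_{k=0}^{N} c_k x^k` of the series with coefficients `c`. -/
noncomputable def seriesTrunc (c : ℕ → ℝ) (N : ℕ) : Polynomial ℝ :=
  ∑ k ∈ Finset.range (N + 1), Polynomial.C (c k) * Polynomial.X ^ k

/-- `(A, B)` is an `[n/n]` Padé pair for the series with coefficients `c`. -/
def IsPadePair (c : ℕ → ℝ) (n : ℕ) (A B : Polynomial ℝ) : Prop :=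
  A.natDegree ≤ n ∧ B.natDegree ≤ n ∧ A.coeff 0 = 0 ∧ B.coeff 0 = 1 ∧
    ∀ j ≤ 2 * n, (A - B * seriesTrunc c (2 * n)).coeff j = 0

/-- The ratio `P_{n,k} = -αβ(2n-2k+1)(n-k+1)/(k(n-(k-1)/2)(β-(2n-k+1))(β-k))` of
consecutive denominator coefficients (the paper's Algorithm 3). -/
noncomputable def riccatiP (α β : ℝ) (n k : ℕ) : ℝ :=
  -(α * β) * (2 * (n : ℝ) - 2 * (k : ℝ) + 1) * ((n : ℝ) - (k : ℝ) + 1) /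
    ((k : ℝ) * ((n : ℝ) - ((k : ℝ) - 1) / 2) * (β - (2 * (n : ℝ) - (k : ℝ) + 1)) * (β - (k : ℝ)))

/-- The ratio `Q_{n,k} = -αβ(2n-2k+3)(n-k+1)/((k-1)(n-(k-1)/2)(β-(2n-k+2))(β-k))` of
consecutive numerator coefficients (the paper's Algorithm 3). -/
noncomputable def riccatiQ (α β : ℝ) (n k : ℕ) : ℝ :=
  -(α * β) * (2 * (n : ℝ) - 2 * (k : ℝ) + 3) * ((n : ℝ) - (k : ℝ) + 1) /
    (((k : ℝ) - 1) * ((n : ℝ) - ((k : ℝ) - 1) / 2) * (β - (2 * (n : ℝ) - (k : ℝ) + 2)) *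
      (β - (k : ℝ)))

open Finset in

open Finset

noncomputable def uu (α β : ℝ) (ν : ℕ) : ℕ → ℝ
  | 0 => 1
  | (m+1) => (-(α*β)/(((m:ℝ)+1)*(((m:ℝ)+1)+(ν:ℝ)-β))) * uu α β ν m

noncomputable def dl (α β : ℝ) (j : ℕ) : ℝ := α*β/(((j:ℝ)-β)*((j:ℝ)+1-β))

lemma uu_zero (α β : ℝ) (ν : ℕ) : uu α β ν 0 = 1 := rfl

lemma uu_succ (α β : ℝ) (ν m : ℕ) :
    uu α β ν (m+1) = (-(α*β)/(((m:ℝ)+1)*(((m:ℝ)+1)+(ν:ℝ)-β))) * uu α β ν m := rfl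

lemma betaNe {β : ℝ} (hβ : ∀ k : ℤ, β ≠ (k : ℝ)) (z : ℤ) (x : ℝ) (hx : x = (z:ℝ)) :
    β - x ≠ 0 := by
  intro h; exact hβ z (by rw [hx] at h; linarith)

lemma betaNe' {β : ℝ} (hβ : ∀ k : ℤ, β ≠ (k : ℝ)) (z : ℤ) (x : ℝ) (hx : x = (z:ℝ)) :
    x - β ≠ 0 := by
  intro h; exact hβ z (by rw [hx] at h; linarith)

lemma uu_rec {α β : ℝ} (hβ : ∀ k : ℤ, β ≠ (k : ℝ)) (ν m : ℕ) :
    (((m:ℝ)+1)*(((m:ℝ)+1)+(ν:ℝ)-β)) * uu α β ν (m+1) = -(α*β) * uu α β ν m := by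
  rw [uu_succ]
  have h1 : ((m:ℝ)+1) ≠ 0 := by positivity
  have h2 : ((m:ℝ)+1+(ν:ℝ)-β) ≠ 0 := betaNe' hβ (m+1+ν) _ (by push_cast; ring)
  field_simp

lemma ratio1 {α β : ℝ} (hβ : ∀ k : ℤ, β ≠ (k : ℝ)) (ν m : ℕ) :
    ((ν:ℝ)+1-β) * uu α β ν m = ((m:ℝ)+(ν:ℝ)+1-β) * uu α β (ν+1) m := by
  induction m with
  | zero => simp [uu_zero]
  | succ m ih =>
    have h1 : ((m:ℝ)+1) ≠ 0 := by positivity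
    have h2 : ((m:ℝ)+1+(ν:ℝ)-β) ≠ 0 := betaNe' hβ (m+1+ν) _ (by push_cast; ring)
    have h3 : ((m:ℝ)+2+(ν:ℝ)-β) ≠ 0 := betaNe' hβ (m+2+ν) _ (by push_cast; ring)
    have A := uu_rec (α := α) hβ ν m
    have B := uu_rec (α := α) hβ (ν+1) m
    push_cast at A B ⊢
    apply mul_left_cancel₀ (mul_ne_zero (mul_ne_zero h1 h2) h3)
    linear_combination (((m:ℝ)+2+ν-β)*((ν:ℝ)+1-β))*A - (((m:ℝ)+1+ν-β)*((m:ℝ)+ν+2-β))*B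
      + (-(α*β)*((m:ℝ)+2+ν-β))*ih

lemma ratio2g {α β : ℝ} (hβ : ∀ k : ℤ, β ≠ (k : ℝ)) (ν m : ℕ) :
    (((ν:ℝ)+1)-β) * ((m:ℝ)+1) * uu α β ν (m+1) = -(α*β) * uu α β (ν+1) m := by
  induction m with
  | zero =>
    have A := uu_rec (α := α) hβ ν 0
    push_cast at A ⊢
    rw [uu_zero] at A
    rw [uu_zero]
    linear_combination A
  | succ m ih =>
    have A := uu_rec (α := α) hβ ν (m+1)
    have B := uu_rec (α := α) hβ (ν+1) m
    have h1 : ((m:ℝ)+1) ≠ 0 := by positivity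
    have h3 : ((m:ℝ)+2+(ν:ℝ)-β) ≠ 0 := betaNe' hβ (m+2+ν) _ (by push_cast; ring)
    push_cast at A B ⊢
    apply mul_left_cancel₀ (mul_ne_zero h1 h3)
    linear_combination (((ν:ℝ)+1-β)*((m:ℝ)+1))*A + (-(α*β))*ih - (-(α*β))*B

lemma conti {α β : ℝ} (hβ : ∀ k : ℤ, β ≠ (k : ℝ)) (ν m : ℕ) :
    uu α β ν (m+1) - uu α β (ν+1) (m+1) = -(dl α β (ν+1)) * uu α β (ν+2) m := by
  have hν : ((ν:ℝ)+1-β) ≠ 0 := betaNe' hβ (ν+1) _ (by push_cast; ring)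
  have hν2 : ((ν:ℝ)+2-β) ≠ 0 := betaNe' hβ (ν+2) _ (by push_cast; ring)
  have hdl : (((ν:ℝ)+1-β)*((ν:ℝ)+2-β)) * dl α β (ν+1) = α*β := by
    have hd2 : ((ν:ℝ)+1+1-β) ≠ 0 := betaNe' hβ (ν+2) _ (by push_cast; ring)
    rw [dl]; push_cast; field_simp; ring
  have r1 := ratio1 (α := α) hβ ν (m+1)
  have r2 := ratio2g (α := α) hβ (ν+1) m
  push_cast at r1 r2
  apply mul_left_cancel₀ (mul_ne_zero hν hν2)
  linear_combination ((ν:ℝ)+2-β)*r1 + r2 + (uu α β (ν+2) m) * hdl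

noncomputable def qc (α β : ℝ) (m i : ℕ) : ℝ :=
  (-1)^i * ((m+1-i).choose i : ℝ) * (α*β)^i /
    ((∏ j ∈ Finset.range i, (β - ((j:ℝ)+1))) * (∏ j ∈ Finset.range i, (β - ((m:ℝ)+1-(j:ℝ)))))

noncomputable def pc (α β : ℝ) (m i : ℕ) : ℝ :=
  (-1)^i * ((m-i).choose i : ℝ) * (α*β)^i /
    ((∏ j ∈ Finset.range i, (β - ((j:ℝ)+2))) * (∏ j ∈ Finset.range i, (β - ((m:ℝ)+1-(j:ℝ)))))

lemma qc_zero (α β : ℝ) (m : ℕ) : qc α β m 0 = 1 := by simp [qc]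

lemma pc_zero (α β : ℝ) (m : ℕ) : pc α β m 0 = 1 := by simp [pc]

lemma qc_vanish (α β : ℝ) (m i : ℕ) (h : m + 1 < 2*i) : qc α β m i = 0 := by
  have : (m+1-i).choose i = 0 := Nat.choose_eq_zero_of_lt (by omega)
  simp [qc, this]

lemma pc_vanish (α β : ℝ) (m i : ℕ) (h : m < 2*i) : pc α β m i = 0 := by
  have : (m-i).choose i = 0 := Nat.choose_eq_zero_of_lt (by omega)
  simp [pc, this]
-- the key binomial identity over ℝ (constant part)
lemma natkey_core (N i : ℕ) :
    ((N:ℝ)+1) * ((N+1).choose (i+1) : ℝ) =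
      ((N:ℝ)+(i:ℝ)+2) * (N.choose (i+1) : ℝ) + ((i:ℝ)+1) * (N.choose i : ℝ) := by
  rcases le_or_gt i N with h | h
  · obtain ⟨e, rfl⟩ : ∃ e, N = i + e := ⟨N - i, by omega⟩
    have hp : ((i+e+1).choose (i+1) : ℝ) = ((i+e).choose i : ℝ) + ((i+e).choose (i+1) : ℝ) := by
      rw [Nat.choose_succ_succ (i+e) i]; push_cast; ring
    have h2 : ((i+e).choose (i+1) : ℝ) * ((i:ℝ)+1) = ((i+e).choose i : ℝ) * (e:ℝ) := by
      have := Nat.choose_succ_right_eq (i+e) i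
      have h3 : i + e - i = e := by omega
      rw [h3] at this
      exact_mod_cast congrArg (Nat.cast (R := ℝ)) this
    push_cast at hp ⊢
    linear_combination ((i:ℝ)+(e:ℝ)+1)*hp - h2
  · have h1 : (N+1).choose (i+1) = 0 := Nat.choose_eq_zero_of_lt (by omega)
    have h2 : N.choose (i+1) = 0 := Nat.choose_eq_zero_of_lt (by omega)
    rcases Nat.lt_or_ge i (N+1) with h' | h'
    · exact absurd h' (by omega)
    · have h3 : N.choose i = 0 := Nat.choose_eq_zero_of_lt (by omega)
      simp [h1, h2, h3]

-- KeyQ: binomial identity with β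
lemma keyQ (β : ℝ) (m i : ℕ) :
    ((m+2-i).choose (i+1) : ℝ) * (β - ((m:ℝ)+2-(i:ℝ))) =
      ((m+1-i).choose (i+1) : ℝ) * (β - ((m:ℝ)+3)) +
      ((m+1-i).choose i : ℝ) * (β - ((i:ℝ)+1)) := by
  rcases le_or_gt i (m+1) with h | h
  · obtain ⟨N, hN⟩ : ∃ N, m+1-i = N ∧ m+1 = N+i := ⟨m+1-i, rfl, by omega⟩
    obtain ⟨hN1, hN2⟩ := hN
    have e1 : m+2-i = N+1 := by omega
    rw [e1, hN1]
    have hm : (m:ℝ) = (N:ℝ)+(i:ℝ)-1 := by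
      have : (m:ℝ)+1 = (N:ℝ)+(i:ℝ) := by exact_mod_cast congrArg (Nat.cast (R := ℝ)) hN2
      linarith
    rw [hm]
    have hp : ((N+1).choose (i+1) : ℝ) = (N.choose i : ℝ) + (N.choose (i+1) : ℝ) := by
      rw [Nat.choose_succ_succ N i]; push_cast; ring
    have hc := natkey_core N i
    linear_combination β*hp - hc
  · have h1 : m+2-i ≤ i := by omega
    have h2 : m+1-i = 0 := by omega
    have e0 : ((m+2-i).choose (i+1) : ℝ) = 0 := by
      norm_cast; exact Nat.choose_eq_zero_of_lt (by omega)
    have e1 : ((0:ℕ).choose (i+1) : ℝ) = 0 := by simp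
    have e2 : ((0:ℕ).choose i : ℝ) = 0 := by
      have : i ≠ 0 := by omega
      simp [Nat.choose_eq_zero_of_lt, this, Nat.pos_of_ne_zero]
    rw [h2, e0, e1, e2]
    ring

lemma keyP (β : ℝ) (m i : ℕ) :
    ((m+1-i).choose (i+1) : ℝ) * (β - ((m:ℝ)+2-(i:ℝ))) =
      ((m-i).choose (i+1) : ℝ) * (β - ((m:ℝ)+3)) +
      ((m-i).choose i : ℝ) * (β - ((i:ℝ)+2)) := by
  rcases le_or_gt i m with h | h
  · obtain ⟨N, hN1, hN2⟩ : ∃ N, m-i = N ∧ m = N+i := ⟨m-i, rfl, by omega⟩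
    have e1 : m+1-i = N+1 := by omega
    rw [e1, hN1]
    have hm : (m:ℝ) = (N:ℝ)+(i:ℝ) := by exact_mod_cast congrArg (Nat.cast (R := ℝ)) hN2
    rw [hm]
    have hp : ((N+1).choose (i+1) : ℝ) = (N.choose i : ℝ) + (N.choose (i+1) : ℝ) := by
      rw [Nat.choose_succ_succ N i]; push_cast; ring
    have hc := natkey_core N i
    linear_combination (β - 1)*hp - hc
  · have h2 : m-i = 0 := by omega
    have e0 : ((m+1-i).choose (i+1) : ℝ) = 0 := by
      norm_cast; exact Nat.choose_eq_zero_of_lt (by omega)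
    have e1 : ((0:ℕ).choose (i+1) : ℝ) = 0 := by simp
    have e2 : ((0:ℕ).choose i : ℝ) = 0 := by
      have : i ≠ 0 := by omega
      simp [Nat.choose_eq_zero_of_lt, this, Nat.pos_of_ne_zero]
    rw [h2, e0, e1, e2]
    ring

lemma fhelp (w a C1 C2 C3 L H H' k1 k2 k3 k5 : ℝ)
    (hL : L ≠ 0) (hH : H ≠ 0) (hH' : H' ≠ 0) (hk1 : k1 ≠ 0) (hk2 : k2 ≠ 0)
    (hk3 : k3 ≠ 0) (hk5 : k5 ≠ 0)
    (heH' : H' * k5 = H * k2)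
    (hkey : C1 * k2 = C2 * k3 + C3 * k1) :
    (-(w*a)*C1)/(L*k1*(H*k3)) = (-(w*a)*C2)/(L*k1*(H*k2)) - (a/(k5*k3)) * ((w*C3)/(L*H')) := by
  have hD : L*k1*H*k3*k2*k5*H' ≠ 0 := by
    exact mul_ne_zero (mul_ne_zero (mul_ne_zero (mul_ne_zero (mul_ne_zero (mul_ne_zero hL hk1) hH) hk3) hk2) hk5) hH'
  have t1 : (-(w*a)*C1)/(L*k1*(H*k3)) = (-(w*a)*C1*(k2*k5*H'))/(L*k1*H*k3*k2*k5*H') := by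
    rw [div_eq_div_iff (by exact mul_ne_zero (mul_ne_zero hL hk1) (mul_ne_zero hH hk3)) hD]
    ring
  have t2 : (-(w*a)*C2)/(L*k1*(H*k2)) = (-(w*a)*C2*(k3*k5*H'))/(L*k1*H*k3*k2*k5*H') := by
    rw [div_eq_div_iff (by exact mul_ne_zero (mul_ne_zero hL hk1) (mul_ne_zero hH hk2)) hD]
    ring
  have t3 : (a/(k5*k3)) * ((w*C3)/(L*H')) = (a*w*C3*(k1*H*k2))/(L*k1*H*k3*k2*k5*H') := by
    rw [div_mul_div_comm, div_eq_div_iff (by exact mul_ne_zero (mul_ne_zero hk5 hk3) (mul_ne_zero hL hH')) hD]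
    ring
  rw [t1, t2, t3, div_sub_div_same]
  congr 1
  linear_combination (-(w*a)*k5*H') * hkey - (a*w*C3*k1) * heH'

section
variable {α β : ℝ}

lemma qrec (hβ : ∀ k : ℤ, β ≠ (k : ℝ)) (m i : ℕ) :
    qc α β (m+2) (i+1) = qc α β (m+1) (i+1) - dl α β (m+2) * qc α β m i := by
  have key := keyQ β m i
  have hL : (∏ j ∈ Finset.range i, (β - ((j:ℝ)+1))) ≠ 0 :=
    Finset.prod_ne_zero_iff.2 (fun j _ => betaNe hβ (j+1) _ (by push_cast; ring))
  have hH : (∏ j ∈ Finset.range i, (β - ((m:ℝ)+2-(j:ℝ)))) ≠ 0 :=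
    Finset.prod_ne_zero_iff.2 (fun j _ => betaNe hβ ((m:ℤ)+2-(j:ℤ)) _ (by push_cast; ring))
  have hH' : (∏ j ∈ Finset.range i, (β - ((m:ℝ)+1-(j:ℝ)))) ≠ 0 :=
    Finset.prod_ne_zero_iff.2 (fun j _ => betaNe hβ ((m:ℤ)+1-(j:ℤ)) _ (by push_cast; ring))
  have eL : (∏ j ∈ Finset.range (i+1), (β - ((j:ℝ)+1)))
      = (∏ j ∈ Finset.range i, (β - ((j:ℝ)+1))) * (β - ((i:ℝ)+1)) :=
    Finset.prod_range_succ _ i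
  have eH2 : (∏ j ∈ Finset.range (i+1), (β - ((m:ℝ)+2+1-(j:ℝ))))
      = (∏ j ∈ Finset.range i, (β - ((m:ℝ)+2-(j:ℝ)))) * (β - ((m:ℝ)+3)) := by
    rw [Finset.prod_range_succ' (fun j => (β - ((m:ℝ)+2+1-(j:ℝ)))) i]
    congr 1
    · exact Finset.prod_congr rfl (fun j _ => by push_cast; ring_nf)
    · push_cast; ring
  have eH1 : (∏ j ∈ Finset.range (i+1), (β - ((m:ℝ)+1+1-(j:ℝ))))
      = (∏ j ∈ Finset.range i, (β - ((m:ℝ)+2-(j:ℝ)))) * (β - ((m:ℝ)+2-(i:ℝ))) := by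
    rw [Finset.prod_range_succ]
    congr 1
    · exact Finset.prod_congr rfl (fun j _ => by push_cast; ring_nf)
    · push_cast; ring
  have eH' : (∏ j ∈ Finset.range i, (β - ((m:ℝ)+1-(j:ℝ)))) * (β - ((m:ℝ)+2))
      = (∏ j ∈ Finset.range i, (β - ((m:ℝ)+2-(j:ℝ)))) * (β - ((m:ℝ)+2-(i:ℝ))) := by
    rw [← eH1, Finset.prod_range_succ' (fun j => (β - ((m:ℝ)+1+1-(j:ℝ)))) i]
    congr 1
    · exact Finset.prod_congr rfl (fun j _ => by push_cast; ring_nf)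
    · push_cast; ring
  have hk1 : (β - ((i:ℝ)+1)) ≠ 0 := betaNe hβ (i+1) _ (by push_cast; ring)
  have hk2 : (β - ((m:ℝ)+2-(i:ℝ))) ≠ 0 := betaNe hβ ((m:ℤ)+2-(i:ℤ)) _ (by push_cast; ring)
  have hk3 : (β - ((m:ℝ)+3)) ≠ 0 := betaNe hβ ((m:ℤ)+3) _ (by push_cast; ring)
  have hk5 : (β - ((m:ℝ)+2)) ≠ 0 := betaNe hβ ((m:ℤ)+2) _ (by push_cast; ring)
  have c1 : m+2+1-(i+1) = m+2-i := by omega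
  have c2 : m+1+1-(i+1) = m+1-i := by omega
  have e1 : qc α β (m+2) (i+1) =
      (-((((-1:ℝ)^i*(α*β)^i)*(α*β)))*((m+2-i).choose (i+1) : ℝ)) /
      ((∏ j ∈ Finset.range i, (β - ((j:ℝ)+1))) * (β - ((i:ℝ)+1)) *
        ((∏ j ∈ Finset.range i, (β - ((m:ℝ)+2-(j:ℝ)))) * (β - ((m:ℝ)+3)))) := by
    rw [qc, c1]
    push_cast
    rw [eL, eH2]
    ring
  have e2 : qc α β (m+1) (i+1) =
      (-((((-1:ℝ)^i*(α*β)^i)*(α*β)))*((m+1-i).choose (i+1) : ℝ)) /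
      ((∏ j ∈ Finset.range i, (β - ((j:ℝ)+1))) * (β - ((i:ℝ)+1)) *
        ((∏ j ∈ Finset.range i, (β - ((m:ℝ)+2-(j:ℝ)))) * (β - ((m:ℝ)+2-(i:ℝ))))) := by
    rw [qc, c2]
    push_cast
    rw [eL, eH1]
    ring
  have e3 : dl α β (m+2) * qc α β m i =
      ((α*β)/((β - ((m:ℝ)+2))*(β - ((m:ℝ)+3)))) *
        ((((-1:ℝ)^i*(α*β)^i)*((m+1-i).choose i : ℝ)) /
          ((∏ j ∈ Finset.range i, (β - ((j:ℝ)+1))) *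
            (∏ j ∈ Finset.range i, (β - ((m:ℝ)+1-(j:ℝ)))))) := by
    rw [dl, qc]
    push_cast
    ring
  rw [e1, e2, e3]
  exact fhelp _ _ _ _ _ _ _ _ _ _ _ _ hL hH hH' hk1 hk2 hk3 hk5 eH' key
end
open Finset
section
variable {α β : ℝ}

lemma prec (hβ : ∀ k : ℤ, β ≠ (k : ℝ)) (m i : ℕ) :
    pc α β (m+2) (i+1) = pc α β (m+1) (i+1) - dl α β (m+2) * pc α β m i := by
  have key := keyP β m i
  have hL : (∏ j ∈ Finset.range i, (β - ((j:ℝ)+2))) ≠ 0 :=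
    Finset.prod_ne_zero_iff.2 (fun j _ => betaNe hβ (j+2) _ (by push_cast; ring))
  have hH : (∏ j ∈ Finset.range i, (β - ((m:ℝ)+2-(j:ℝ)))) ≠ 0 :=
    Finset.prod_ne_zero_iff.2 (fun j _ => betaNe hβ ((m:ℤ)+2-(j:ℤ)) _ (by push_cast; ring))
  have hH' : (∏ j ∈ Finset.range i, (β - ((m:ℝ)+1-(j:ℝ)))) ≠ 0 :=
    Finset.prod_ne_zero_iff.2 (fun j _ => betaNe hβ ((m:ℤ)+1-(j:ℤ)) _ (by push_cast; ring))
  have eL : (∏ j ∈ Finset.range (i+1), (β - ((j:ℝ)+2)))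
      = (∏ j ∈ Finset.range i, (β - ((j:ℝ)+2))) * (β - ((i:ℝ)+2)) :=
    Finset.prod_range_succ _ i
  have eH2 : (∏ j ∈ Finset.range (i+1), (β - ((m:ℝ)+2+1-(j:ℝ))))
      = (∏ j ∈ Finset.range i, (β - ((m:ℝ)+2-(j:ℝ)))) * (β - ((m:ℝ)+3)) := by
    rw [Finset.prod_range_succ' (fun j => (β - ((m:ℝ)+2+1-(j:ℝ)))) i]
    congr 1
    · exact Finset.prod_congr rfl (fun j _ => by push_cast; ring_nf)
    · push_cast; ring
  have eH1 : (∏ j ∈ Finset.range (i+1), (β - ((m:ℝ)+1+1-(j:ℝ))))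
      = (∏ j ∈ Finset.range i, (β - ((m:ℝ)+2-(j:ℝ)))) * (β - ((m:ℝ)+2-(i:ℝ))) := by
    rw [Finset.prod_range_succ]
    congr 1
    · exact Finset.prod_congr rfl (fun j _ => by push_cast; ring_nf)
    · push_cast; ring
  have eH' : (∏ j ∈ Finset.range i, (β - ((m:ℝ)+1-(j:ℝ)))) * (β - ((m:ℝ)+2))
      = (∏ j ∈ Finset.range i, (β - ((m:ℝ)+2-(j:ℝ)))) * (β - ((m:ℝ)+2-(i:ℝ))) := by
    rw [← eH1, Finset.prod_range_succ' (fun j => (β - ((m:ℝ)+1+1-(j:ℝ)))) i]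
    congr 1
    · exact Finset.prod_congr rfl (fun j _ => by push_cast; ring_nf)
    · push_cast; ring
  have hk1 : (β - ((i:ℝ)+2)) ≠ 0 := betaNe hβ (i+2) _ (by push_cast; ring)
  have hk2 : (β - ((m:ℝ)+2-(i:ℝ))) ≠ 0 := betaNe hβ ((m:ℤ)+2-(i:ℤ)) _ (by push_cast; ring)
  have hk3 : (β - ((m:ℝ)+3)) ≠ 0 := betaNe hβ ((m:ℤ)+3) _ (by push_cast; ring)
  have hk5 : (β - ((m:ℝ)+2)) ≠ 0 := betaNe hβ ((m:ℤ)+2) _ (by push_cast; ring)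
  have c1 : m+2-(i+1) = m+1-i := by omega
  have c2 : m+1-(i+1) = m-i := by omega
  have e1 : pc α β (m+2) (i+1) =
      (-((((-1:ℝ)^i*(α*β)^i)*(α*β)))*((m+1-i).choose (i+1) : ℝ)) /
      ((∏ j ∈ Finset.range i, (β - ((j:ℝ)+2))) * (β - ((i:ℝ)+2)) *
        ((∏ j ∈ Finset.range i, (β - ((m:ℝ)+2-(j:ℝ)))) * (β - ((m:ℝ)+3)))) := by
    rw [pc, c1]
    push_cast
    rw [eL, eH2]
    ring
  have e2 : pc α β (m+1) (i+1) =
      (-((((-1:ℝ)^i*(α*β)^i)*(α*β)))*((m-i).choose (i+1) : ℝ)) /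
      ((∏ j ∈ Finset.range i, (β - ((j:ℝ)+2))) * (β - ((i:ℝ)+2)) *
        ((∏ j ∈ Finset.range i, (β - ((m:ℝ)+2-(j:ℝ)))) * (β - ((m:ℝ)+2-(i:ℝ))))) := by
    rw [pc, c2]
    push_cast
    rw [eL, eH1]
    ring
  have e3 : dl α β (m+2) * pc α β m i =
      ((α*β)/((β - ((m:ℝ)+2))*(β - ((m:ℝ)+3)))) *
        ((((-1:ℝ)^i*(α*β)^i)*((m-i).choose i : ℝ)) /
          ((∏ j ∈ Finset.range i, (β - ((j:ℝ)+2))) *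
            (∏ j ∈ Finset.range i, (β - ((m:ℝ)+1-(j:ℝ)))))) := by
    rw [dl, pc]
    push_cast
    ring
  rw [e1, e2, e3]
  exact fhelp _ _ _ _ _ _ _ _ _ _ _ _ hL hH hH' hk1 hk2 hk3 hk5 eH' key

noncomputable def Wk (α β : ℝ) (m k : ℕ) : ℝ :=
  ∑ i ∈ Finset.range (k+1), (qc α β m i * uu α β 1 (k-i) - pc α β m i * uu α β 0 (k-i))

noncomputable def Dd (α β : ℝ) (m : ℕ) : ℝ := ∏ j ∈ Finset.range m, dl α β (j+1)

lemma Wrec (hβ : ∀ k : ℤ, β ≠ (k : ℝ)) (m k : ℕ) :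
    Wk α β (m+2) (k+1) = Wk α β (m+1) (k+1) - dl α β (m+2) * Wk α β m k := by
  rw [Wk, Wk, Wk]
  rw [Finset.sum_range_succ' (fun i => (qc α β (m+2) i * uu α β 1 (k+1-i) - pc α β (m+2) i * uu α β 0 (k+1-i))) (k+1)]
  rw [Finset.sum_range_succ' (fun i => (qc α β (m+1) i * uu α β 1 (k+1-i) - pc α β (m+1) i * uu α β 0 (k+1-i))) (k+1)]
  simp only [qc_zero, pc_zero, Nat.sub_zero]
  have hterm : (∑ i ∈ Finset.range (k+1),
      (qc α β (m+2) (i+1) * uu α β 1 (k+1-(i+1)) - pc α β (m+2) (i+1) * uu α β 0 (k+1-(i+1))))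
    = (∑ i ∈ Finset.range (k+1),
      (qc α β (m+1) (i+1) * uu α β 1 (k+1-(i+1)) - pc α β (m+1) (i+1) * uu α β 0 (k+1-(i+1))))
      - (∑ i ∈ Finset.range (k+1), dl α β (m+2) * (qc α β m i * uu α β 1 (k-i) - pc α β m i * uu α β 0 (k-i))) := by
    rw [← Finset.sum_sub_distrib]
    apply Finset.sum_congr rfl
    intro i _
    have hs : k+1-(i+1) = k-i := by omega
    rw [hs, qrec hβ m i, prec hβ m i]
    ring
  rw [hterm, ← Finset.mul_sum]
  ring

lemma qc11 : qc α β 1 1 = - dl α β 1 := by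
  simp [qc, dl, Finset.prod_range_one]
  ring

lemma Wmain (hβ : ∀ k : ℤ, β ≠ (k : ℝ)) :
    ∀ m k, Wk α β m k = Dd α β (m+1) * (if m+1 ≤ k then uu α β (m+2) (k-(m+1)) else 0) := by
  intro m
  induction m using Nat.strong_induction_on with
  | _ m ih =>
    match m with
    | 0 =>
      intro k
      have hW : Wk α β 0 k = uu α β 1 k - uu α β 0 k := by
        rw [Wk]
        match k with
        | 0 => simp [qc_zero, pc_zero]
        | (t+1) =>
          rw [Finset.sum_range_succ' _ (t+1)]
          simp only [qc_zero, pc_zero, Nat.sub_zero]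
          rw [Finset.sum_eq_zero, zero_add]
          · ring
          · intro i _
            rw [qc_vanish α β 0 (i+1) (by omega), pc_vanish α β 0 (i+1) (by omega)]
            ring
      rw [hW, Dd]
      match k with
      | 0 =>
        rw [if_neg (by omega)]
        simp [uu_zero]
      | (t+1) =>
        rw [if_pos (by omega), Finset.prod_range_one]
        have e : t+1-(0+1) = t := by omega
        rw [e]
        have hc := conti (α := α) hβ 0 t
        norm_num at hc ⊢
        linear_combination -hc
    | 1 =>
      intro k
      have hW : ∀ t, Wk α β 1 (t+2) =
          (uu α β 1 (t+2) - uu α β 0 (t+2)) - dl α β 1 * uu α β 1 (t+1) := by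
        intro t
        rw [Wk]
        rw [Finset.sum_range_succ' _ (t+2)]
        rw [Finset.sum_range_succ' _ (t+1)]
        simp only [qc_zero, pc_zero, Nat.sub_zero, qc11]
        rw [Finset.sum_eq_zero]
        · have hp : pc α β 1 1 = 0 := pc_vanish α β 1 1 (by omega)
          have e1 : t+2-(0+1) = t+1 := by omega
          simp only [Nat.zero_add, e1, hp, qc11]
          ring
        · intro i _
          rw [qc_vanish α β 1 (i+1+1) (by omega), pc_vanish α β 1 (i+1+1) (by omega)]
          ring
      match k with
      | 0 =>
        rw [Wk, if_neg (by omega)]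
        simp [qc_zero, pc_zero, uu_zero]
      | 1 =>
        rw [Wk, if_neg (by omega)]
        rw [Finset.sum_range_succ' _ 1]
        simp only [qc_zero, pc_zero, Nat.sub_zero, qc11]
        rw [Finset.sum_range_one]
        have hp : pc α β 1 1 = 0 := pc_vanish α β 1 1 (by omega)
        rw [hp]
        have hc := conti (α := α) hβ 0 0
        norm_num [qc11] at hc ⊢
        simp only [uu_zero] at hc ⊢
        linear_combination -hc
      | (t+2) =>
        rw [hW t, if_pos (by omega)]
        have e : t+2-(1+1) = t := by omega
        rw [e, Dd]
        rw [Finset.prod_range_succ, Finset.prod_range_one]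
        have hc1 := conti (α := α) hβ 0 (t+1)
        have hc2 := conti (α := α) hβ 1 t
        norm_num at hc1 hc2 ⊢
        linear_combination -hc1 - dl α β 1 * hc2
    | (m+2) =>
      intro k
      match k with
      | 0 =>
        rw [Wk, if_neg (by omega)]
        simp [qc_zero, pc_zero, uu_zero]
      | (t+1) =>
        rw [Wrec hβ m t]
        rw [ih (m+1) (by omega) (t+1), ih m (by omega) t]
        have d2 : Dd α β (m+2) = Dd α β (m+1) * dl α β (m+2) :=
          Finset.prod_range_succ _ (m+1)
        have d3 : Dd α β (m+3) = Dd α β (m+2) * dl α β (m+3) :=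
          Finset.prod_range_succ _ (m+2)
        have n1 : m+1+1 = m+2 := rfl
        have n2 : m+1+2 = m+3 := rfl
        have n3 : m+2+1 = m+3 := rfl
        have n4 : m+2+2 = m+4 := rfl
        rw [n1, n2, n3, n4]
        rcases le_or_gt (m+1) t with h | h
        · rw [if_pos (by omega : m+2 ≤ t+1), if_pos h]
          have e0 : t+1-(m+2) = t-(m+1) := by omega
          rw [e0]
          rcases Nat.eq_zero_or_pos (t-(m+1)) with hj0 | hjpos
          · rw [if_neg (by omega : ¬ (m+3 ≤ t+1))]
            rw [hj0, uu_zero, uu_zero]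
            linear_combination d2
          · obtain ⟨s, hs⟩ : ∃ s, t-(m+1) = s+1 := ⟨t-(m+1)-1, by omega⟩
            rw [if_pos (by omega : m+3 ≤ t+1), hs]
            have e1 : t+1-(m+3) = s := by omega
            rw [e1]
            have hc := conti (α := α) hβ (m+2) s
            norm_num at hc
            linear_combination (uu α β (m+3) (s+1)) * d2
              - (Dd α β (m+1) * dl α β (m+2)) * hc - (uu α β (m+4) s) * d3
              - (dl α β (m+3) * uu α β (m+4) s) * d2
        · rw [if_neg (by omega : ¬ (m+2 ≤ t+1)), if_neg (by omega : ¬ (m+1 ≤ t)),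
             if_neg (by omega : ¬ (m+3 ≤ t+1))]
          ring
end
open Finset

section
variable {α β : ℝ}

lemma natkeyR (j d : ℕ) :
    ((j:ℝ)+1) * ((j:ℝ)+(d:ℝ)+1) * ((j+d).choose (j+1) : ℝ)
      = (d:ℝ) * ((d:ℝ)+1) * ((j+d+1).choose j : ℝ) := by
  have h1 : ((j+d).choose (j+1) : ℝ) * ((j:ℝ)+1) = ((j+d).choose j : ℝ) * (d:ℝ) := by
    have := Nat.choose_succ_right_eq (j+d) j
    rw [show j+d-j = d from by omega] at this
    exact_mod_cast congrArg (Nat.cast (R := ℝ)) this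
  have h2 : ((j+d).choose j : ℝ) * ((j:ℝ)+(d:ℝ)+1) = ((j+d+1).choose j : ℝ) * ((d:ℝ)+1) := by
    have := Nat.choose_mul_succ_eq (j+d) j
    rw [show j+d+1-j = d+1 from by omega] at this
    exact_mod_cast congrArg (Nat.cast (R := ℝ)) this
  linear_combination ((j:ℝ)+(d:ℝ)+1)*h1 + (d:ℝ)*h2

lemma qstep (hβ : ∀ k : ℤ, β ≠ (k : ℝ)) (n k : ℕ) (hk : k+1 ≤ n) :
    qc α β (2*n-1) (k+1) = riccatiP α β n (k+1) * qc α β (2*n-1) k := by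
  obtain ⟨d, rfl⟩ : ∃ d, n = k+1+d := ⟨n-(k+1), by omega⟩
  have em : 2*(k+1+d)-1 = 2*(k+d)+1 := by omega
  rw [em]
  have key := natkeyR k (2*d+1)
  set L := ∏ j ∈ Finset.range k, (β - ((j:ℝ)+1)) with hLdef
  set H := ∏ j ∈ Finset.range k, (β - (2*((k:ℝ)+(d:ℝ))+2-(j:ℝ))) with hHdef
  have hL : L ≠ 0 :=
    Finset.prod_ne_zero_iff.2 (fun j _ => betaNe hβ (j+1) _ (by push_cast; ring))
  have hH : H ≠ 0 :=
    Finset.prod_ne_zero_iff.2 (fun j _ =>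
      betaNe hβ (2*((k:ℤ)+(d:ℤ))+2-(j:ℤ)) _ (by push_cast; ring))
  have hk1 : (β - ((k:ℝ)+1)) ≠ 0 := betaNe hβ (k+1) _ (by push_cast; ring)
  have hk2 : (β - ((k:ℝ)+2*(d:ℝ)+2)) ≠ 0 := betaNe hβ ((k:ℤ)+2*(d:ℤ)+2) _ (by push_cast; ring)
  have eL : (∏ j ∈ Finset.range (k+1), (β - ((j:ℝ)+1))) = L * (β - ((k:ℝ)+1)) :=
    Finset.prod_range_succ _ k
  have eH : (∏ j ∈ Finset.range (k+1), (β - (((2*(k+d)+1:ℕ):ℝ)+1-(j:ℝ))))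
      = H * (β - ((k:ℝ)+2*(d:ℝ)+2)) := by
    rw [Finset.prod_range_succ]
    congr 1
    · exact Finset.prod_congr rfl (fun j _ => by push_cast; ring_nf)
    · push_cast; ring
  have eH0 : (∏ j ∈ Finset.range k, (β - (((2*(k+d)+1:ℕ):ℝ)+1-(j:ℝ)))) = H :=
    Finset.prod_congr rfl (fun j _ => by push_cast; ring_nf)
  have c1 : 2*(k+d)+1+1-(k+1) = k+2*d+1 := by omega
  have c2 : 2*(k+d)+1+1-k = k+2*d+2 := by omega
  have e1 : qc α β (2*(k+d)+1) (k+1) =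
      ((-1:ℝ)^(k+1) * ((k+2*d+1).choose (k+1) : ℝ) * (α*β)^(k+1)) /
        (L * (β - ((k:ℝ)+1)) * (H * (β - ((k:ℝ)+2*(d:ℝ)+2)))) := by
    rw [qc, c1, ← eL, ← eH]
  have e2 : qc α β (2*(k+d)+1) k =
      ((-1:ℝ)^k * ((k+2*d+2).choose k : ℝ) * (α*β)^k) / (L * H) := by
    rw [qc, c2, ← eH0]
  have hP : riccatiP α β (k+1+d) (k+1) =
      (-(α*β) * (2*(d:ℝ)+1) * ((d:ℝ)+1)) /
        ((((k:ℝ)+1) * (((k:ℝ)+2*(d:ℝ)+2)/2)) *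
          ((β - ((k:ℝ)+2*(d:ℝ)+2)) * (β - ((k:ℝ)+1)))) := by
    rw [riccatiP]
    push_cast
    ring_nf
  rw [e1, e2, hP, div_mul_div_comm]
  have hD1 : (L * (β - ((k:ℝ)+1)) * (H * (β - ((k:ℝ)+2*(d:ℝ)+2)))) ≠ 0 :=
    mul_ne_zero (mul_ne_zero hL hk1) (mul_ne_zero hH hk2)
  have hkk : (((k:ℝ)+1) * (((k:ℝ)+2*(d:ℝ)+2)/2)) ≠ 0 := by positivity
  have hD2 : ((((k:ℝ)+1) * (((k:ℝ)+2*(d:ℝ)+2)/2)) *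
      ((β - ((k:ℝ)+2*(d:ℝ)+2)) * (β - ((k:ℝ)+1))) * (L * H)) ≠ 0 :=
    mul_ne_zero (mul_ne_zero hkk (mul_ne_zero hk2 hk1)) (mul_ne_zero hL hH)
  rw [div_eq_div_iff hD1 hD2]
  rw [show k+(2*d+1)+1 = k+2*d+2 from by omega, show k+(2*d+1) = k+2*d+1 from by omega] at key
  push_cast at key ⊢
  linear_combination ((-1:ℝ)^k * (α*β)^(k+1) * L * H *
    (β - ((k:ℝ)+1)) * (β - ((k:ℝ)+2*(d:ℝ)+2)) * (-1/2)) * key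
end
open Finset
section
variable {α β : ℝ}

lemma pstep (hβ : ∀ k : ℤ, β ≠ (k : ℝ)) (n t : ℕ) (ht : t+2 ≤ n) :
    pc α β (2*n-1) (t+1) = riccatiQ α β n (t+2) * pc α β (2*n-1) t := by
  obtain ⟨e, rfl⟩ : ∃ e, n = t+2+e := ⟨n-(t+2), by omega⟩
  have em : 2*(t+2+e)-1 = 2*(t+e)+3 := by omega
  rw [em]
  have key := natkeyR t (2*e+2)
  set L := ∏ j ∈ Finset.range t, (β - ((j:ℝ)+2)) with hLdef
  set H := ∏ j ∈ Finset.range t, (β - (2*((t:ℝ)+(e:ℝ))+4-(j:ℝ))) with hHdef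
  have hL : L ≠ 0 :=
    Finset.prod_ne_zero_iff.2 (fun j _ => betaNe hβ (j+2) _ (by push_cast; ring))
  have hH : H ≠ 0 :=
    Finset.prod_ne_zero_iff.2 (fun j _ =>
      betaNe hβ (2*((t:ℤ)+(e:ℤ))+4-(j:ℤ)) _ (by push_cast; ring))
  have hk1 : (β - ((t:ℝ)+2)) ≠ 0 := betaNe hβ (t+2) _ (by push_cast; ring)
  have hk2 : (β - ((t:ℝ)+2*(e:ℝ)+4)) ≠ 0 := betaNe hβ ((t:ℤ)+2*(e:ℤ)+4) _ (by push_cast; ring)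
  have eL : (∏ j ∈ Finset.range (t+1), (β - ((j:ℝ)+2))) = L * (β - ((t:ℝ)+2)) :=
    Finset.prod_range_succ _ t
  have eH : (∏ j ∈ Finset.range (t+1), (β - (((2*(t+e)+3:ℕ):ℝ)+1-(j:ℝ))))
      = H * (β - ((t:ℝ)+2*(e:ℝ)+4)) := by
    rw [Finset.prod_range_succ]
    congr 1
    · exact Finset.prod_congr rfl (fun j _ => by push_cast; ring_nf)
    · push_cast; ring
  have eH0 : (∏ j ∈ Finset.range t, (β - (((2*(t+e)+3:ℕ):ℝ)+1-(j:ℝ)))) = H :=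
    Finset.prod_congr rfl (fun j _ => by push_cast; ring_nf)
  have c1 : 2*(t+e)+3-(t+1) = t+2*e+2 := by omega
  have c2 : 2*(t+e)+3-t = t+2*e+3 := by omega
  have e1 : pc α β (2*(t+e)+3) (t+1) =
      ((-1:ℝ)^(t+1) * ((t+2*e+2).choose (t+1) : ℝ) * (α*β)^(t+1)) /
        (L * (β - ((t:ℝ)+2)) * (H * (β - ((t:ℝ)+2*(e:ℝ)+4)))) := by
    rw [pc, c1, ← eL, ← eH]
  have e2 : pc α β (2*(t+e)+3) t =
      ((-1:ℝ)^t * ((t+2*e+3).choose t : ℝ) * (α*β)^t) / (L * H) := by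
    rw [pc, c2, ← eH0]
  have hQ : riccatiQ α β (t+2+e) (t+2) =
      (-(α*β) * (2*(e:ℝ)+3) * ((e:ℝ)+1)) /
        ((((t:ℝ)+1) * (((t:ℝ)+2*(e:ℝ)+3)/2)) *
          ((β - ((t:ℝ)+2*(e:ℝ)+4)) * (β - ((t:ℝ)+2)))) := by
    rw [riccatiQ]
    push_cast
    ring_nf
  rw [e1, e2, hQ, div_mul_div_comm]
  have hD1 : (L * (β - ((t:ℝ)+2)) * (H * (β - ((t:ℝ)+2*(e:ℝ)+4)))) ≠ 0 :=
    mul_ne_zero (mul_ne_zero hL hk1) (mul_ne_zero hH hk2)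
  have hkk : (((t:ℝ)+1) * (((t:ℝ)+2*(e:ℝ)+3)/2)) ≠ 0 := by positivity
  have hD2 : ((((t:ℝ)+1) * (((t:ℝ)+2*(e:ℝ)+3)/2)) *
      ((β - ((t:ℝ)+2*(e:ℝ)+4)) * (β - ((t:ℝ)+2))) * (L * H)) ≠ 0 :=
    mul_ne_zero (mul_ne_zero hkk (mul_ne_zero hk2 hk1)) (mul_ne_zero hL hH)
  rw [div_eq_div_iff hD1 hD2]
  rw [show t+(2*e+2)+1 = t+2*e+3 from by omega, show t+(2*e+2) = t+2*e+2 from by omega] at key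
  push_cast at key ⊢
  linear_combination ((-1:ℝ)^t * (α*β)^(t+1) * L * H *
    (β - ((t:ℝ)+2)) * (β - ((t:ℝ)+2*(e:ℝ)+4)) * (-1/2)) * key
end
open Finset
section
variable {α β : ℝ}

lemma swapconv (a b u : ℕ → ℝ) (N : ℕ) :
    ∑ j ∈ Finset.range (N+1), (∑ i ∈ Finset.range (j+1), a i * b (j-i)) * u (N-j)
      = ∑ i ∈ Finset.range (N+1), a i * (∑ s ∈ Finset.range (N+1-i), b s * u (N-i-s)) := by
  have step1 : ∑ j ∈ Finset.range (N+1), (∑ i ∈ Finset.range (j+1), a i * b (j-i)) * u (N-j)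
      = ∑ j ∈ Finset.range (N+1), ∑ i ∈ Finset.range (j+1), a i * b (j-i) * u (N-j) := by
    apply Finset.sum_congr rfl
    intro j _
    rw [Finset.sum_mul]
  rw [step1]
  have step2 := Finset.sum_Ico_Ico_comm 0 (N+1) (fun i j => a i * b (j-i) * u (N-j))
  simp only [Nat.Ico_zero_eq_range] at step2
  rw [← step2]
  apply Finset.sum_congr rfl
  intro i hi
  rw [Finset.sum_Ico_eq_sum_range, Finset.mul_sum]
  apply Finset.sum_congr rfl
  intro s _
  have e1 : i+s-i = s := by omega
  have e2 : N-(i+s) = N-i-s := by omega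
  rw [e1, e2]
  ring

lemma ustar (hβ : ∀ k : ℤ, β ≠ (k : ℝ)) (c : ℕ → ℝ) (hc0 : c 0 = 0)
    (hc : ∀ k : ℕ, 1 ≤ k →
      ((k : ℝ) - β) * c k + β * (∑ i ∈ Finset.Ico 1 k, c i * c (k - i))
        + (if k = 1 then α else 0) = 0) :
    ∀ k, β * ∑ i ∈ Finset.range (k+1), c i * uu α β 0 (k-i) = (k:ℝ) * uu α β 0 k := by
  intro k
  induction k using Nat.strong_induction_on with
  | _ k IH =>
    match k with
    | 0 => simp [hc0, uu_zero]
    | (K+1) =>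
      have hr : ∀ j ∈ Finset.range (K+2),
          (((j:ℝ)-β)*c j + β*(∑ i ∈ Finset.range j, c i * c (j-i))
            + (if j = 1 then α else 0)) * uu α β 0 (K+1-j) = 0 := by
        intro j _
        rcases Nat.eq_zero_or_pos j with rfl | hj
        · simp [hc0]
        · have hin : ∑ i ∈ Finset.range j, c i * c (j-i)
              = ∑ i ∈ Finset.Ico 1 j, c i * c (j-i) := by
            rw [Finset.range_eq_Ico, Finset.sum_eq_sum_Ico_succ_bot (by omega : 0 < j)]
            simp [hc0]
          rw [hin, hc j hj]
          ring
      have hS : ∑ j ∈ Finset.range (K+2),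
          (((j:ℝ)-β)*c j + β*(∑ i ∈ Finset.range j, c i * c (j-i))
            + (if j = 1 then α else 0)) * uu α β 0 (K+1-j) = 0 :=
        Finset.sum_eq_zero hr
      -- expand
      have hexp : ∑ j ∈ Finset.range (K+2),
          (((j:ℝ)-β)*c j + β*(∑ i ∈ Finset.range j, c i * c (j-i))
            + (if j = 1 then α else 0)) * uu α β 0 (K+1-j)
          = (∑ j ∈ Finset.range (K+2), ((j:ℝ)-β) * c j * uu α β 0 (K+1-j))
            + β * (∑ j ∈ Finset.range (K+2),
                (∑ i ∈ Finset.range (j+1), c i * c (j-i)) * uu α β 0 (K+1-j))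
            + α * uu α β 0 K := by
        have hin : ∀ j, (∑ i ∈ Finset.range (j+1), c i * c (j-i))
            = ∑ i ∈ Finset.range j, c i * c (j-i) := by
          intro j
          rw [Finset.sum_range_succ]
          simp [hc0]
        have hite : ∑ j ∈ Finset.range (K+2), (if j = 1 then α else 0) * uu α β 0 (K+1-j)
            = α * uu α β 0 K := by
          rw [Finset.sum_eq_single 1]
          · norm_num
          · intro j _ hj1
            simp [hj1]
          · intro h
            exact absurd (Finset.mem_range.2 (by omega)) h
        rw [← hite]
        symm
        rw [Finset.mul_sum, ← Finset.sum_add_distrib, ← Finset.sum_add_distrib]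
        apply Finset.sum_congr rfl
        intro j _
        rw [hin j]
        ring
      rw [hexp] at hS
      -- swap the double sum and apply IH
      have hswap := swapconv c c (uu α β 0) (K+1)
      have hdd : β * (∑ j ∈ Finset.range (K+2),
            (∑ i ∈ Finset.range (j+1), c i * c (j-i)) * uu α β 0 (K+1-j))
          = ∑ i ∈ Finset.range (K+2), c i * (((K+1-i:ℕ)):ℝ) * uu α β 0 (K+1-i) := by
        rw [hswap, Finset.mul_sum]
        apply Finset.sum_congr rfl
        intro i hi
        have hi' : i < K+2 := Finset.mem_range.1 hi
        rcases Nat.eq_zero_or_pos i with rfl | hipos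
        · simp [hc0]
        · have hlt : K+1-i < K+1 := by omega
          have := IH (K+1-i) hlt
          have er : K+2-i = (K+1-i)+1 := by omega
          have es : ∀ s, K+1-i-s = (K+1-i)-s := fun s => by omega
          rw [er]
          calc β * (c i * ∑ s ∈ Finset.range ((K+1-i)+1), c s * uu α β 0 (K+1-i-s))
              = c i * (β * ∑ s ∈ Finset.range ((K+1-i)+1), c s * uu α β 0 ((K+1-i)-s)) := by
                ring
            _ = c i * (((K+1-i:ℕ)):ℝ) * uu α β 0 (K+1-i) := by rw [this]; ring
      -- combine
      have hsum : (∑ j ∈ Finset.range (K+2), ((j:ℝ)-β) * c j * uu α β 0 (K+1-j))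
          + (∑ j ∈ Finset.range (K+2), c j * (((K+1-j:ℕ)):ℝ) * uu α β 0 (K+1-j))
          = ((K:ℝ)+1-β) * ∑ j ∈ Finset.range (K+2), c j * uu α β 0 (K+1-j) := by
        rw [← Finset.sum_add_distrib, Finset.mul_sum]
        apply Finset.sum_congr rfl
        intro j hj
        have hjle : j ≤ K+1 := by
          have h' := Finset.mem_range.1 hj
          omega
        have hcast : (((K+1-j:ℕ)):ℝ) = (K:ℝ)+1-(j:ℝ) := by
          rw [Nat.cast_sub hjle]
          push_cast
          ring
        rw [hcast]
        ring
      have hrec := uu_rec (α := α) (β := β) hβ 0 K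
      have hne : ((K:ℝ)+1-β) ≠ 0 := betaNe' hβ (K+1) _ (by push_cast; ring)
      apply mul_left_cancel₀ hne
      push_cast at hrec ⊢
      linear_combination β*hS - β*hdd - β*hsum - hrec
end

/-- **Direct product formulas for the Padé coefficients of the Riccati series (the
paper's Algorithm 3)**: with `c` the Taylor coefficients of the Riccati solution and
`b_k`, `a_k` generated by `b_0 = 1`, `b_k = P_{n,k} b_{k-1}`, `a_1 = c_1`,
`a_k = Q_{n,k} a_{k-1}`, the polynomials `B_n = ∑_{k=0}^n b_k x^k` and
`A_n = ∑_{k=1}^n a_k x^k` form an `[n/n]` Padé pair. -/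
theorem riccati_direct_algorithm (α β : ℝ) (hα : α ≠ 0) (hβ : ∀ k : ℤ, β ≠ (k : ℝ))
    (c : ℕ → ℝ) (hc0 : c 0 = 0)
    (hc : ∀ k : ℕ, 1 ≤ k →
      ((k : ℝ) - β) * c k + β * (∑ i ∈ Finset.Ico 1 k, c i * c (k - i))
        + (if k = 1 then α else 0) = 0)
    (n : ℕ) (hn : 1 ≤ n)
    (b a : ℕ → ℝ)
    (hb0 : b 0 = 1)
    (hbk : ∀ k : ℕ, 1 ≤ k → k ≤ n → b k = riccatiP α β n k * b (k - 1))
    (ha1 : a 1 = c 1)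
    (hak : ∀ k : ℕ, 2 ≤ k → k ≤ n → a k = riccatiQ α β n k * a (k - 1)) :
    IsPadePair c n
      (∑ k ∈ Finset.Icc 1 n, Polynomial.C (a k) * Polynomial.X ^ k)
      (∑ k ∈ Finset.range (n + 1), Polynomial.C (b k) * Polynomial.X ^ k) := by
  have hβ0 : β ≠ 0 := by simpa using hβ 0
  have h1β : (1:ℝ) - β ≠ 0 := betaNe' hβ 1 _ (by push_cast; ring)
  have hbqc : ∀ i, i ≤ n → b i = qc α β (2*n-1) i := by
    intro i
    induction i with
    | zero => intro _; rw [hb0, qc_zero]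
    | succ i ihi =>
      intro hin
      rw [hbk (i+1) (by omega) hin]
      have e : i+1-1 = i := by omega
      rw [e, ihi (by omega)]
      exact (qstep hβ n i hin).symm
  have hbq : ∀ i, i ≤ 2*n → (if i ≤ n then b i else 0) = qc α β (2*n-1) i := by
    intro i hi
    by_cases h : i ≤ n
    · rw [if_pos h]; exact hbqc i h
    · rw [if_neg h, qc_vanish α β (2*n-1) i (by omega)]
  have hapc : ∀ j, 1 ≤ j → j ≤ n → a j = c 1 * pc α β (2*n-1) (j-1) := by
    intro j
    induction j with
    | zero => intro h; omega
    | succ j ihj =>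
      intro _ hjn
      rcases Nat.eq_zero_or_pos j with rfl | hj
      · simpa [pc_zero] using ha1
      · obtain ⟨t, rfl⟩ : ∃ t, j = t+1 := ⟨j-1, by omega⟩
        rw [hak (t+2) (by omega) hjn]
        have e : t+2-1 = t+1 := by omega
        rw [e, ihj (by omega) (by omega)]
        have e2 : t+1-1 = t := by omega
        rw [e2]
        have hp := pstep (α := α) hβ n t (by omega)
        rw [hp]
        ring
  have hap : ∀ j, 1 ≤ j → j ≤ 2*n → (if j ≤ n then a j else 0) = c 1 * pc α β (2*n-1) (j-1) := by
    intro j hj1 hj2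
    by_cases h : j ≤ n
    · rw [if_pos h]; exact hapc j hj1 h
    · rw [if_neg h, pc_vanish α β (2*n-1) (j-1) (by omega)]
      ring
  have hstar := ustar (α := α) hβ c hc0 hc
  have hc1 : ((1:ℝ)-β) * c 1 = -α := by
    have h := hc 1 le_rfl
    simp at h
    linarith
  set Bco : ℕ → ℝ := fun i => if i ≤ n then b i else 0 with hBcoDef
  set Aco : ℕ → ℝ := fun j => if 1 ≤ j ∧ j ≤ n then a j else 0 with hAcoDef
  set E : ℕ → ℝ := fun j => Aco j - ∑ i ∈ Finset.range (j+1), Bco i * c (j-i) with hEDef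
  have hF : ∀ K, K ≤ 2*n → ∑ j ∈ Finset.range (K+1), E j * uu α β 0 (K-j) = 0 := by
    intro K hK
    match K with
    | 0 =>
      simp [hEDef, hAcoDef, hBcoDef, hc0, uu_zero]
    | (t+1) =>
      have hsplit : ∑ j ∈ Finset.range (t+2), E j * uu α β 0 (t+1-j)
          = (∑ j ∈ Finset.range (t+2), Aco j * uu α β 0 (t+1-j))
            - ∑ j ∈ Finset.range (t+2),
                (∑ i ∈ Finset.range (j+1), Bco i * c (j-i)) * uu α β 0 (t+1-j) := by
        rw [← Finset.sum_sub_distrib]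
        apply Finset.sum_congr rfl
        intro j _
        simp only [hEDef]
        ring
      rw [hsplit]
      have hswap := swapconv Bco c (uu α β 0) (t+1)
      have h2 : β * ∑ i ∈ Finset.range (t+2), Bco i * (∑ s ∈ Finset.range (t+2-i), c s * uu α β 0 (t+1-i-s))
          = ∑ i ∈ Finset.range (t+2), Bco i * (((t+1-i:ℕ)):ℝ) * uu α β 0 (t+1-i) := by
        rw [Finset.mul_sum]
        apply Finset.sum_congr rfl
        intro i hi
        have hi' : i < t+2 := Finset.mem_range.1 hi
        have er : t+2-i = (t+1-i)+1 := by omega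
        rw [er]
        calc β * (Bco i * ∑ s ∈ Finset.range ((t+1-i)+1), c s * uu α β 0 (t+1-i-s))
            = Bco i * (β * ∑ s ∈ Finset.range ((t+1-i)+1), c s * uu α β 0 ((t+1-i)-s)) := by
              ring
          _ = Bco i * (((t+1-i:ℕ)):ℝ) * uu α β 0 (t+1-i) := by rw [hstar (t+1-i)]; ring
      have h3 : ((1:ℝ)-β) * ∑ i ∈ Finset.range (t+2), Bco i * (((t+1-i:ℕ)):ℝ) * uu α β 0 (t+1-i)
          = ∑ i ∈ Finset.range (t+1), Bco i * (-(α*β)) * uu α β 1 (t-i) := by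
        rw [Finset.sum_range_succ]
        have hz : Bco (t+1) * (((t+1-(t+1):ℕ)):ℝ) * uu α β 0 (t+1-(t+1)) = 0 := by
          have e : t+1-(t+1) = 0 := by omega
          rw [e]
          norm_num
        rw [hz, add_zero, Finset.mul_sum]
        apply Finset.sum_congr rfl
        intro i hi
        have hi' : i < t+1 := Finset.mem_range.1 hi
        have er : t+1-i = (t-i)+1 := by omega
        have ec : (((t+1-i:ℕ)):ℝ) = ((t-i:ℕ):ℝ)+1 := by
          rw [show t+1-i = (t-i)+1 from by omega]
          push_cast
          ring
        rw [er]
        have hr := ratio2g (α := α) hβ 0 (t-i)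
        push_cast at hr ⊢
        linear_combination Bco i * hr
      have h4 : ∑ j ∈ Finset.range (t+2), Aco j * uu α β 0 (t+1-j)
          = ∑ j ∈ Finset.range (t+1), c 1 * pc α β (2*n-1) j * uu α β 0 (t-j) := by
        rw [Finset.sum_range_succ' _ (t+1)]
        have hz : Aco 0 * uu α β 0 (t+1-0) = 0 := by
          simp [hAcoDef]
        rw [hz, add_zero]
        apply Finset.sum_congr rfl
        intro j hj
        have hj' : j < t+1 := Finset.mem_range.1 hj
        have ha' : Aco (j+1) = c 1 * pc α β (2*n-1) j := by
          have h := hap (j+1) (by omega) (by omega)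
          rw [show j+1-1 = j from by omega] at h
          rw [← h]
          simp only [hAcoDef]
          by_cases hjn : j+1 ≤ n
          · rw [if_pos ⟨by omega, hjn⟩, if_pos hjn]
          · rw [if_neg (fun hcon => hjn hcon.2), if_neg hjn]
        rw [ha']
        have e : t+1-(j+1) = t-j := by omega
        rw [e]
      -- main cancellation
      have hW := Wmain (α := α) hβ (2*n-1) t
      rw [show 2*n-1+1 = 2*n from by omega, if_neg (by omega : ¬ (2*n ≤ t)), mul_zero, Wk] at hW
      have hmul : β * (((1:ℝ)-β) * ((∑ j ∈ Finset.range (t+2), Aco j * uu α β 0 (t+1-j))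
          - ∑ j ∈ Finset.range (t+2),
              (∑ i ∈ Finset.range (j+1), Bco i * c (j-i)) * uu α β 0 (t+1-j))) = 0 := by
        rw [hswap, h4]
        have hsplit2 : β * (((1:ℝ)-β) * ((∑ j ∈ Finset.range (t+1), c 1 * pc α β (2*n-1) j * uu α β 0 (t-j))
            - ∑ i ∈ Finset.range (t+2), Bco i * (∑ s ∈ Finset.range (t+2-i), c s * uu α β 0 (t+1-i-s))))
            = β * (((1:ℝ)-β) * (∑ j ∈ Finset.range (t+1), c 1 * pc α β (2*n-1) j * uu α β 0 (t-j)))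
              - ((1:ℝ)-β) * (β * ∑ i ∈ Finset.range (t+2), Bco i * (∑ s ∈ Finset.range (t+2-i), c s * uu α β 0 (t+1-i-s))) := by
          ring
        rw [hsplit2, h2, h3]
        have hA : β * (((1:ℝ)-β) * ∑ j ∈ Finset.range (t+1), c 1 * pc α β (2*n-1) j * uu α β 0 (t-j))
            = -(α*β) * ∑ j ∈ Finset.range (t+1), pc α β (2*n-1) j * uu α β 0 (t-j) := by
          rw [Finset.mul_sum, Finset.mul_sum, Finset.mul_sum]
          apply Finset.sum_congr rfl
          intro j _
          linear_combination (β * pc α β (2*n-1) j * uu α β 0 (t-j)) * hc1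
        rw [hA]
        have hB : ∑ i ∈ Finset.range (t+1), Bco i * (-(α*β)) * uu α β 1 (t-i)
            = -(α*β) * ∑ i ∈ Finset.range (t+1), qc α β (2*n-1) i * uu α β 1 (t-i) := by
          rw [Finset.mul_sum]
          apply Finset.sum_congr rfl
          intro i hi
          have hi' : i < t+1 := Finset.mem_range.1 hi
          rw [show Bco i = qc α β (2*n-1) i from hbq i (by omega)]
          ring
        rw [hB]
        rw [Finset.sum_sub_distrib] at hW
        linear_combination (α*β) * hW
      have h5 := mul_left_cancel₀ hβ0 (hmul.trans (mul_zero β).symm)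
      exact mul_left_cancel₀ h1β (h5.trans (mul_zero ((1:ℝ)-β)).symm)
  have hEzero : ∀ j, j ≤ 2*n → E j = 0 := by
    intro j
    induction j using Nat.strong_induction_on with
    | _ j IH =>
      intro hj
      have h1 := hF j hj
      rw [Finset.sum_range_succ] at h1
      have h2 : ∑ i ∈ Finset.range j, E i * uu α β 0 (j-i) = 0 :=
        Finset.sum_eq_zero (fun i hi => by
          have hij := Finset.mem_range.1 hi
          rw [IH i hij (by omega)]
          ring)
      rw [h2, show j-j = 0 from by omega, uu_zero, zero_add, mul_one] at h1
      exact h1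
  -- coefficient lemmas
  have hAcoeff : ∀ jj, (∑ k ∈ Finset.Icc 1 n, Polynomial.C (a k) * Polynomial.X ^ k).coeff jj
      = Aco jj := by
    intro jj
    rw [Polynomial.finset_sum_coeff]
    have hterm : ∀ k ∈ Finset.Icc 1 n,
        (Polynomial.C (a k) * Polynomial.X ^ k).coeff jj = if k = jj then a k else 0 := by
      intro k _
      rw [Polynomial.coeff_C_mul, Polynomial.coeff_X_pow]
      rcases eq_or_ne jj k with rfl | h
      · simp
      · simp [h, Ne.symm h]
    rw [Finset.sum_congr rfl hterm, Finset.sum_ite_eq' (Finset.Icc 1 n) jj a]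
    simp only [hAcoDef, Finset.mem_Icc]
  have hBcoeff : ∀ jj, (∑ k ∈ Finset.range (n+1), Polynomial.C (b k) * Polynomial.X ^ k).coeff jj
      = Bco jj := by
    intro jj
    rw [Polynomial.finset_sum_coeff]
    have hterm : ∀ k ∈ Finset.range (n+1),
        (Polynomial.C (b k) * Polynomial.X ^ k).coeff jj = if k = jj then b k else 0 := by
      intro k _
      rw [Polynomial.coeff_C_mul, Polynomial.coeff_X_pow]
      rcases eq_or_ne jj k with rfl | h
      · simp
      · simp [h, Ne.symm h]
    rw [Finset.sum_congr rfl hterm, Finset.sum_ite_eq' (Finset.range (n+1)) jj b]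
    simp only [hBcoDef, Finset.mem_range, Nat.lt_succ_iff]
  have hCcoeff : ∀ mm, (seriesTrunc c (2*n)).coeff mm = if mm ≤ 2*n then c mm else 0 := by
    intro mm
    rw [seriesTrunc, Polynomial.finset_sum_coeff]
    have hterm : ∀ k ∈ Finset.range (2*n+1),
        (Polynomial.C (c k) * Polynomial.X ^ k).coeff mm = if k = mm then c k else 0 := by
      intro k _
      rw [Polynomial.coeff_C_mul, Polynomial.coeff_X_pow]
      rcases eq_or_ne mm k with rfl | h
      · simp
      · simp [h, Ne.symm h]
    rw [Finset.sum_congr rfl hterm, Finset.sum_ite_eq' (Finset.range (2*n+1)) mm c]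
    simp only [Finset.mem_range, Nat.lt_succ_iff]
  refine ⟨?_, ?_, ?_, ?_, ?_⟩
  · apply Polynomial.natDegree_sum_le_of_forall_le
    intro k hk
    exact (Polynomial.natDegree_C_mul_X_pow_le (a k) k).trans (Finset.mem_Icc.1 hk).2
  · apply Polynomial.natDegree_sum_le_of_forall_le
    intro k hk
    exact (Polynomial.natDegree_C_mul_X_pow_le (b k) k).trans
      (Nat.lt_succ_iff.1 (Finset.mem_range.1 hk))
  · rw [hAcoeff]
    simp [hAcoDef]
  · rw [hBcoeff]
    simp [hBcoDef, hb0]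
  · intro j hj
    rw [Polynomial.coeff_sub, hAcoeff, Polynomial.coeff_mul,
      Finset.Nat.sum_antidiagonal_eq_sum_range_succ_mk]
    have hterm : ∀ i ∈ Finset.range (j+1),
        (∑ k ∈ Finset.range (n+1), Polynomial.C (b k) * Polynomial.X ^ k).coeff i
          * (seriesTrunc c (2*n)).coeff (j-i) = Bco i * c (j-i) := by
      intro i hi
      rw [hBcoeff, hCcoeff, if_pos (by omega : j-i ≤ 2*n)]
    rw [Finset.sum_congr rfl hterm]
    have := hEzero j hj
    simp only [hEDef] at this
    linarith [this]
end
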